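/- The mergeability relation on branching types is sound: if two branching types over disjoint-or-equal label sets are mergeable, then their merge ⊔ is an upper bound with respect to the branching subtyping relation, i.e., T1 ≤ T1 ⊔ T2 and T2 ≤ T1 ⊔ T2. -/
import Mathlib


/-- Local session types: `end`, send, receive, and branching over a finite
list of labelled continuations (labels are `ℕ` and assumed distinct). -/
inductive SType where
  | done : SType
  | send (p : ℕ) (t : SType) : SType
  | recv (p : ℕ) (t : SType) : SType
  | branch (p : ℕ) (bs : List (ℕ × SType)) : SType

/-- Branching subtyping: covariant on prefixes; a branching is a subtype of
one offering more branches (every branch on the left occurs, with a subtyped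
continuation, on the right; the witnessing branch on the right is given by the
Skolem function `g`). -/
inductive SubT : SType → SType → Prop where
  | done : SubT .done .done
  | send {p t t'} : SubT t t' → SubT (.send p t) (.send p t')
  | recv {p t t'} : SubT t t' → SubT (.recv p t) (.recv p t')
  | branch {p bs cs} (g : ℕ → SType → SType) :
      (∀ l t, (l, t) ∈ bs → (l, g l t) ∈ cs) →
      (∀ l t, (l, t) ∈ bs → SubT t (g l t)) →
      SubT (.branch p bs) (.branch p cs)

/-- Mergeability `T1 ⋈ T2`: the smallest congruence such that two branchings
at the same participant are mergeable when all their common-label branches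
are mergeable (branches with distinct labels may differ arbitrarily). -/
inductive Mg : SType → SType → Prop where
  | done : Mg .done .done
  | send {p t t'} : Mg t t' → Mg (.send p t) (.send p t')
  | recv {p t t'} : Mg t t' → Mg (.recv p t) (.recv p t')
  | branch {p bs cs} :
      (∀ l t t', (l, t) ∈ bs → (l, t') ∈ cs → Mg t t') →
      Mg (.branch p bs) (.branch p cs)

/-- The merge `T1 ⊔ T2 = T3`, as a relation: `T ⊔ T = T`, homomorphic on
prefixes, and on branchings it unions the branch sets, recursively merging
the continuations of common labels (the merged continuation of a common label
is given by the Skolem function `h`). -/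
inductive Mrg : SType → SType → SType → Prop where
  | refl (t : SType) : Mrg t t t
  | send {p t1 t2 t3} : Mrg t1 t2 t3 → Mrg (.send p t1) (.send p t2) (.send p t3)
  | recv {p t1 t2 t3} : Mrg t1 t2 t3 → Mrg (.recv p t1) (.recv p t2) (.recv p t3)
  | branch {p bs cs ds} (h : ℕ → SType → SType → SType) :
      (∀ l t, (l, t) ∈ bs → (∀ t', (l, t') ∉ cs) → (l, t) ∈ ds) →
      (∀ l t, (l, t) ∈ cs → (∀ t', (l, t') ∉ bs) → (l, t) ∈ ds) →
      (∀ l t1 t2, (l, t1) ∈ bs → (l, t2) ∈ cs → (l, h l t1 t2) ∈ ds) →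
      (∀ l t1 t2, (l, t1) ∈ bs → (l, t2) ∈ cs → Mrg t1 t2 (h l t1 t2)) →
      (∀ l t, (l, t) ∈ ds →
        (l, t) ∈ bs ∨ (l, t) ∈ cs ∨
          ∃ t1 t2, (l, t1) ∈ bs ∧ (l, t2) ∈ cs ∧ t = h l t1 t2) →
      Mrg (.branch p bs) (.branch p cs) (.branch p ds)

theorem SubT.rfl : (t : SType) → SubT t t
  | .done => .done
  | .send _ t => .send (SubT.rfl t)
  | .recv _ t => .recv (SubT.rfl t)
  | .branch _ bs => .branch (fun _ t => t) (fun _ _ h => h)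
      (fun _ t h => SubT.rfl t)
decreasing_by
  all_goals simp_wf
  have := List.sizeOf_lt_of_mem h
  simp at this ⊢
  omega

/-- Soundness of mergeability: if `T1 ⋈ T2`, their merge `T1 ⊔ T2` is an
upper bound for the branching subtyping: `T1 ≤ T1 ⊔ T2` and `T2 ≤ T1 ⊔ T2`. -/
theorem mergeability_sound (T1 T2 T : SType) (hmg : Mg T1 T2) (hmrg : Mrg T1 T2 T) :
    SubT T1 T ∧ SubT T2 T := by
  clear hmg
  induction hmrg with
  | refl t => exact ⟨SubT.rfl t, SubT.rfl t⟩
  | send _ ih => exact ⟨.send ih.1, .send ih.2⟩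
  | recv _ ih => exact ⟨.recv ih.1, .recv ih.2⟩
  | @branch p bs cs ds h h1 h2 h3 _ h5 ih =>
    classical
    constructor
    · refine SubT.branch
        (fun l t => if hc : ∃ t2, (l, t2) ∈ cs then h l t hc.choose else t) ?_ ?_
      · intro l t hm
        by_cases hc : ∃ t2, (l, t2) ∈ cs
        · simpa [hc] using h3 l t hc.choose hm hc.choose_spec
        · push_neg at hc
          simpa [not_exists.mpr hc] using h1 l t hm hc
      · intro l t hm
        by_cases hc : ∃ t2, (l, t2) ∈ cs
        · simpa [hc] using (ih l t hc.choose hm hc.choose_spec).1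
        · simp [hc, SubT.rfl]
    · refine SubT.branch
        (fun l t => if hb : ∃ t1, (l, t1) ∈ bs then h l hb.choose t else t) ?_ ?_
      · intro l t hm
        by_cases hb : ∃ t1, (l, t1) ∈ bs
        · simpa [hb] using h3 l hb.choose t hb.choose_spec hm
        · push_neg at hb
          simpa [not_exists.mpr hb] using h2 l t hm hb
      · intro l t hm
        by_cases hb : ∃ t1, (l, t1) ∈ bs
        · simpa [hb] using (ih l hb.choose t hb.choose_spec hm).2
        · simp [hb, SubT.rfl]
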